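/- arXiv:0907.1948 — 7 statements merged into one kernel-verified Lean document; each statement's English description precedes it below -/
import Mathlib

section
/- Let U and V be finite sets with |U| = m and |V| = n ≥ 2, let 2 ≤ q ≤ n, and let ε > 0. There exists δ > 0 (depending only on ε, n, q) such that: for every set R of functions from U to V with |R| > (q - 1 + ε)^m, there exists a subset S ⊆ U with |S| ≥ δ·m that is (V, q)-shattered by R. -/
/-!
Write `K = (n choose q)`. If a family `R` of functions, all constant outside a finite set `A`,
shatters no subset of `A` of size `d`, then `|R| ≤ ∑_{i<d} K^i (q-1)^{|A|-i} (|A| choose i)`.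
This is proved by induction on `A`. Removing a point `x`, every projection `g` of a function
of `R` has a fibre `F_g` of values at `x`, and `|F_g| ≤ (q - 1) + (|F_g| choose q)`. The
projections shatter no set of size `d`, and for each `q`-set `T` of values the `g` with
`T ⊆ F_g` shatter no set of size `d - 1`, because the values of `T` at `x` extend any
shattering of `S` to one of `insert x S`. Pascal's rule closes the induction.

For `d - 1 ≤ m / k` and any `0 < x`, the bound is at most `(K / x)^(d-1) (q - 1 + x)^m`,
which is below `(q - 1 + ε)^m` once `x < ε` is fixed and `k` is large.
-/

/-- `S` is `(L, q)`-shattered by `R`: there are `q` functions `c_1, …, c_q : S → L`,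
pointwise pairwise distinct on `S`, such that every choice function `h : S → [q]`
is realized by the restriction of some `f ∈ R`. -/
def Shatters {U V : Type*} (R : Set (U → V)) (S : Finset U) (L : Finset V) (q : ℕ) : Prop :=
  ∃ c : Fin q → U → V,
    (∀ i, ∀ x ∈ S, c i x ∈ L) ∧
    (∀ x ∈ S, ∀ i j : Fin q, i ≠ j → c i x ≠ c j x) ∧
    (∀ h : U → Fin q, ∃ f ∈ R, ∀ x ∈ S, f x = c (h x) x)

open Finset Function

namespace Shatters

variable {U V : Type*} {R R' : Set (U → V)} {S : Finset U} {L : Finset V} {q : ℕ}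

lemma empty_of_mem {f : U → V} (hf : f ∈ R) : Shatters R ∅ L q :=
  ⟨fun _ => f, by simp, by simp, fun _ => ⟨f, hf, by simp⟩⟩

lemma of_forall_exists_eqOn (h : Shatters R' S L q)
    (hR' : ∀ g ∈ R', ∃ f ∈ R, Set.EqOn f g S) : Shatters R S L q := by
  obtain ⟨c, hcL, hc_ne, hc⟩ := h
  refine ⟨c, hcL, hc_ne, fun h => ?_⟩
  obtain ⟨g, hg, hgc⟩ := hc h
  obtain ⟨f, hf, hfg⟩ := hR' g hg
  exact ⟨f, hf, fun x hx => (hfg hx).trans (hgc x hx)⟩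

lemma insert [DecidableEq U] {x : U} (hx : x ∉ S) {T : Finset V} (hT : #T = q) (hTL : T ⊆ L)
    (h : Shatters R' S L q) (hR' : ∀ g ∈ R', ∀ v ∈ T, update g x v ∈ R) :
    Shatters R (insert x S) L q := by
  obtain ⟨c, hcL, hc_ne, hc⟩ := h
  let e : Fin q → V := fun i => (T.equivFinOfCardEq hT).symm i
  have he : Injective e := Subtype.val_injective.comp (T.equivFinOfCardEq hT).symm.injective
  have heT : ∀ i, e i ∈ T := fun i => ((T.equivFinOfCardEq hT).symm i).2
  have hne : ∀ y ∈ S, y ≠ x := fun y hy hyx => hx (hyx ▸ hy)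
  refine ⟨fun i => update (c i) x (e i), fun i y hy => ?_, fun y hy i j hij => ?_, fun h => ?_⟩
  · rcases mem_insert.mp hy with rfl | hy
    · simpa using hTL (heT i)
    · simpa [hne y hy] using hcL i y hy
  · rcases mem_insert.mp hy with rfl | hy
    · simpa using he.ne hij
    · simpa [hne y hy] using hc_ne y hy i j hij
  · obtain ⟨g, hg, hgc⟩ := hc h
    refine ⟨update g x (e (h x)), hR' g hg _ (heT _), fun y hy => ?_⟩
    rcases mem_insert.mp hy with rfl | hy
    · simp
    · simpa [hne y hy] using hgc y hy

end Shatters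

def shatterBound (a K N d : ℕ) : ℕ :=
  ∑ i ∈ range d, K ^ i * a ^ (N - i) * N.choose i

lemma shatterBound_zero_succ (a K d : ℕ) : shatterBound a K 0 (d + 1) = 1 := by
  simp [shatterBound, sum_range_succ']

lemma shatterBound_succ_succ (a K N d : ℕ) :
    shatterBound a K (N + 1) (d + 1) =
      a * shatterBound a K N (d + 1) + K * shatterBound a K N d := by
  have key : ∀ i, K ^ (i + 1) * a ^ (N + 1 - (i + 1)) * (N + 1).choose (i + 1) =
      a * (K ^ (i + 1) * a ^ (N - (i + 1)) * N.choose (i + 1)) +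
        K * (K ^ i * a ^ (N - i) * N.choose i) := by
    intro i
    rw [Nat.add_sub_add_right]
    rcases lt_or_ge i N with hi | hi
    · rw [Nat.choose_succ_succ, show N - i = N - (i + 1) + 1 by omega]
      ring
    · rw [Nat.choose_succ_succ, Nat.choose_eq_zero_of_lt (Nat.lt_succ_of_le hi)]
      ring
  unfold shatterBound
  rw [sum_range_succ', sum_range_succ' _ d, sum_congr rfl fun i _ => key i,
    sum_add_distrib, ← mul_sum, ← mul_sum]
  simp only [Nat.choose_zero_right, pow_zero, Nat.sub_zero]
  ring

lemma sum_range_pow_mul_pow_mul_choose_le {R : Type*} [CommSemiring R] [PartialOrder R]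
    [IsOrderedRing R] {x y : R} (hx : 0 ≤ x) (hy : 0 ≤ y) (m d : ℕ) :
    ∑ i ∈ range d, x ^ i * y ^ (m - i) * m.choose i ≤ (x + y) ^ m := by
  rw [add_pow]
  calc ∑ i ∈ range d, x ^ i * y ^ (m - i) * m.choose i
      ≤ ∑ i ∈ range (max d (m + 1)), x ^ i * y ^ (m - i) * m.choose i :=
        sum_le_sum_of_subset_of_nonneg (range_mono (le_max_left _ _)) fun _ _ _ => by positivity
    _ = ∑ i ∈ range (m + 1), x ^ i * y ^ (m - i) * m.choose i := by
        refine (sum_subset (range_mono (le_max_right _ _)) fun i _ hi => ?_).symm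
        rw [Nat.choose_eq_zero_of_lt (by simpa using hi), Nat.cast_zero, mul_zero]

lemma le_sub_one_add_choose {q : ℕ} (hq : 1 ≤ q) (t : ℕ) : t ≤ q - 1 + t.choose q := by
  rcases lt_or_ge t q with ht | ht
  · omega
  obtain ⟨s, rfl⟩ := Nat.exists_eq_add_of_le' ht
  have : s + 1 ≤ (s + q).choose s := by
    rw [← Nat.choose_succ_self_right]; exact Nat.choose_le_choose s (by omega)
  rw [Nat.choose_symm_add] at this
  omega

section Counting

open scoped Classical

lemma card_le_sum_card_update_mem {U V : Type*} [Fintype V]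
    (R : Finset (U → V)) (x : U) (v₀ : V) :
    #R ≤ ∑ g ∈ R.image (update · x v₀), #{v | update g x v ∈ R} := by
  have hR : R ⊆ (R.image (update · x v₀)).biUnion fun g =>
      ({v | update g x v ∈ R} : Finset V).image (update g x) := by
    intro f hf
    refine mem_biUnion.mpr ⟨update f x v₀, mem_image_of_mem _ hf,
      mem_image.mpr ⟨f x, ?_, ?_⟩⟩ <;> simp [hf]
  exact (card_le_card hR).trans (card_biUnion_le.trans (sum_le_sum fun _ _ => card_image_le))

lemma sum_choose_card_eq_sum_card_filter_subset {α β : Type*} [Fintype β]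
    (G : Finset α) (F : α → Finset β) (q : ℕ) :
    ∑ g ∈ G, (#(F g)).choose q = ∑ T ∈ powersetCard q univ, #{g ∈ G | T ⊆ F g} := by
  have h : ∀ g,
      powersetCard q (F g) = (powersetCard q univ).bipartiteAbove (fun g T => T ⊆ F g) g := by
    intro g; ext T; simp [bipartiteAbove, and_comm]
  simp_rw [← card_powersetCard, h]
  exact sum_card_bipartiteAbove_eq_sum_card_bipartiteBelow _

lemma card_le_sub_one_mul_card_image_add_sum {U V : Type*} [Fintype V]
    {q : ℕ} (hq : 1 ≤ q) (R : Finset (U → V)) (x : U) (v₀ : V) :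
    #R ≤ (q - 1) * #(R.image (update · x v₀)) + ∑ T ∈ powersetCard q univ,
      #{g ∈ R.image (update · x v₀) | T ⊆ ({v | update g x v ∈ R} : Finset V)} := by
  calc #R ≤ ∑ g ∈ R.image (update · x v₀), #{v | update g x v ∈ R} :=
        card_le_sum_card_update_mem R x v₀
    _ ≤ ∑ g ∈ R.image (update · x v₀), (q - 1 + (#{v | update g x v ∈ R}).choose q) :=
        sum_le_sum fun _ _ => le_sub_one_add_choose hq _
    _ = _ := by
        rw [sum_add_distrib, sum_const, smul_eq_mul, mul_comm,
          sum_choose_card_eq_sum_card_filter_subset]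

theorem card_le_shatterBound {U V : Type*} [Fintype V] {q : ℕ} (hq : 1 ≤ q) (v₀ : V)
    (A : Finset U) : ∀ (d : ℕ) (R : Finset (U → V)), (∀ f ∈ R, ∀ y ∉ A, f y = v₀) →
      (∀ S ⊆ A, Shatters (R : Set (U → V)) S univ q → #S < d) →
      #R ≤ shatterBound (q - 1) ((Fintype.card V).choose q) #A d := by
  have eq_zero_of_lt_zero : ∀ (B : Finset U) (R : Finset (U → V)),
      (∀ S ⊆ B, Shatters (R : Set (U → V)) S univ q → #S < 0) → #R = 0 := fun B R hsh =>
    card_eq_zero.mpr <| eq_empty_of_forall_notMem fun _ hf =>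
      Nat.not_lt_zero _ (hsh ∅ (empty_subset B) (Shatters.empty_of_mem hf))
  induction A using Finset.induction_on with
  | empty =>
    rintro (_ | d) R hR hsh
    · exact (eq_zero_of_lt_zero ∅ R hsh).le
    rw [card_empty, shatterBound_zero_succ]
    exact card_le_one.mpr fun f hf g hg =>
      funext fun y => (hR f hf y (notMem_empty y)).trans (hR g hg y (notMem_empty y)).symm
  | insert x A hx ih =>
    rintro (_ | d) R hR hsh
    · exact (eq_zero_of_lt_zero _ R hsh).le
    set R' := R.image (update · x v₀)
    have hR' : ∀ g ∈ R', ∀ y ∉ A, g y = v₀ := by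
      simp only [R', mem_image]
      rintro _ ⟨f, hf, rfl⟩ y hy
      by_cases hyx : y = x
      · simp [hyx]
      · simpa [hyx] using hR f hf y (by simp [hyx, hy])
    have hshR' : ∀ S ⊆ A, Shatters (R' : Set (U → V)) S univ q → #S < d + 1 := by
      refine fun S hS hRS => hsh S (hS.trans (subset_insert x A)) (hRS.of_forall_exists_eqOn ?_)
      simp only [R', coe_image, Set.forall_mem_image]
      exact fun f hf =>
        ⟨f, hf, fun y hy => (update_of_ne (ne_of_mem_of_not_mem (hS hy) hx) _ _).symm⟩
    have hshT : ∀ T ∈ powersetCard q univ, ∀ S ⊆ A,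
        Shatters (({g ∈ R' | T ⊆ ({v | update g x v ∈ R} : Finset V)} : Finset _) :
          Set (U → V)) S univ q → #S < d := by
      intro T hT S hS hRS
      have := hsh _ (insert_subset_insert x hS) <| Shatters.insert (fun h => hx (hS h))
        (mem_powersetCard.mp hT).2 (subset_univ T) hRS fun g hg v hv => by
          simpa using (mem_filter.mp hg).2 hv
      rwa [card_insert_of_notMem fun h => hx (hS h), Nat.add_lt_add_iff_right] at this
    calc #R ≤ (q - 1) * #R' + ∑ T ∈ powersetCard q univ,
          #{g ∈ R' | T ⊆ ({v | update g x v ∈ R} : Finset V)} :=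
          card_le_sub_one_mul_card_image_add_sum hq R x v₀
      _ ≤ (q - 1) * shatterBound (q - 1) ((Fintype.card V).choose q) #A (d + 1) +
          ∑ T ∈ powersetCard q (univ : Finset V),
            shatterBound (q - 1) ((Fintype.card V).choose q) #A d := by
          gcongr with T hT
          · exact ih _ _ hR' hshR'
          · exact ih _ _ (fun g hg => hR' g (mem_filter.mp hg).1) (hshT T hT)
      _ = shatterBound (q - 1) ((Fintype.card V).choose q) #(insert x A) (d + 1) := by
          rw [sum_const, card_powersetCard, card_univ, smul_eq_mul, card_insert_of_notMem hx,
            shatterBound_succ_succ]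

end Counting

lemma exists_shatterBound_le (a K : ℕ) {ε : ℝ} (hε : 0 < ε) :
    ∃ k : ℕ, 0 < k ∧ ∀ m, (shatterBound a K m (m / k + 1) : ℝ) ≤ (a + ε) ^ m := by
  set x := ε / 2
  have hx : 0 < x := half_pos hε
  set ρ := (a + ε) / (a + x)
  have hax : 0 < (a : ℝ) + x := by positivity
  have hρ : 1 < ρ := (one_lt_div hax).mpr (by simp only [x]; linarith)
  set B := max ((K : ℝ) / x) 1
  obtain ⟨k, hk⟩ := pow_unbounded_of_one_lt B hρ
  have hk0 : 0 < k := Nat.pos_of_ne_zero fun h => by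
    simp only [h, pow_zero] at hk
    exact (le_max_right _ _).not_gt hk
  refine ⟨k, hk0, fun m => ?_⟩
  have hterm : ∀ i ∈ range (m / k + 1), (K : ℝ) ^ i * a ^ (m - i) * m.choose i ≤
      B ^ (m / k) * (x ^ i * a ^ (m - i) * m.choose i) := by
    intro i hi
    have hKB : (K : ℝ) ^ i ≤ B ^ (m / k) * x ^ i :=
      calc (K : ℝ) ^ i = (K / x) ^ i * x ^ i := by rw [← mul_pow, div_mul_cancel₀ _ hx.ne']
        _ ≤ B ^ (m / k) * x ^ i := by
          gcongr
          calc (K / x) ^ i ≤ B ^ i := by gcongr; exact le_max_left _ _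
            _ ≤ B ^ (m / k) :=
              pow_le_pow_right₀ (le_max_right _ _) (Nat.lt_succ_iff.mp (mem_range.mp hi))
    calc (K : ℝ) ^ i * a ^ (m - i) * m.choose i
        ≤ B ^ (m / k) * x ^ i * a ^ (m - i) * m.choose i := by gcongr
      _ = _ := by ring
  have hBρ : B ^ (m / k) ≤ ρ ^ m :=
    calc B ^ (m / k) ≤ (ρ ^ k) ^ (m / k) := by gcongr
      _ = ρ ^ (m / k * k) := by rw [← pow_mul, mul_comm]
      _ ≤ ρ ^ m := pow_le_pow_right₀ hρ.le (Nat.div_mul_le_self m k)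
  calc (shatterBound a K m (m / k + 1) : ℝ)
      = ∑ i ∈ range (m / k + 1), (K : ℝ) ^ i * a ^ (m - i) * m.choose i := by
        simp only [shatterBound, Nat.cast_sum, Nat.cast_mul, Nat.cast_pow]
    _ ≤ ∑ i ∈ range (m / k + 1), B ^ (m / k) * (x ^ i * a ^ (m - i) * m.choose i) :=
        sum_le_sum hterm
    _ ≤ B ^ (m / k) * (x + a) ^ m := by
        rw [← mul_sum]
        gcongr
        exact sum_range_pow_mul_pow_mul_choose_le hx.le (Nat.cast_nonneg a) m _
    _ ≤ ρ ^ m * (a + x) ^ m := by rw [add_comm x]; gcongr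
    _ = (a + ε) ^ m := by rw [← mul_pow, div_mul_cancel₀ _ hax.ne']

theorem stmt0_general (n q : ℕ) (hn : 2 ≤ n) (hq2 : 2 ≤ q)
    (ε : ℝ) (hε : 0 < ε) :
    ∃ δ : ℝ, 0 < δ ∧
      ∀ (U V : Type) [Fintype U] [Fintype V] (m : ℕ),
        Fintype.card U = m → Fintype.card V = n →
        ∀ R : Finset (U → V), ((q : ℝ) - 1 + ε) ^ m < (R.card : ℝ) →
          ∃ S : Finset U, δ * m ≤ (S.card : ℝ) ∧
            Shatters (R : Set (U → V)) S Finset.univ q := by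
  obtain ⟨k, hk, hbound⟩ := exists_shatterBound_le (q - 1) (n.choose q) hε
  refine ⟨1 / k, by positivity, fun U V _ _ m hU hV R hR => ?_⟩
  obtain ⟨v₀⟩ : Nonempty V := Fintype.card_pos_iff.mp (by rw [hV]; omega)
  by_contra! hsmall
  have hshattered : ∀ S ⊆ univ, Shatters (R : Set (U → V)) S univ q → #S < m / k + 1 := by
    intro S _ hRS
    have hS : (#S : ℝ) * k < m := by
      have := lt_of_not_ge fun h => hsmall S h hRS
      rwa [one_div, inv_mul_eq_div, lt_div_iff₀ (by positivity)] at this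
    exact Nat.lt_succ_of_le ((Nat.le_div_iff_mul_le hk).mpr (by exact_mod_cast hS.le))
  have hcard :=
    card_le_shatterBound (show 1 ≤ q by omega) v₀ univ (m / k + 1) R (by simp) hshattered
  rw [card_univ, hU, hV] at hcard
  have := (Nat.cast_le (α := ℝ)).mpr hcard |>.trans (hbound m)
  rw [Nat.cast_pred (by omega)] at this
  linarith

theorem stmt0 (n q : ℕ) (hn : 2 ≤ n) (hq2 : 2 ≤ q) (hqn : q ≤ n)
    (ε : ℝ) (hε : 0 < ε) :
    ∃ δ : ℝ, 0 < δ ∧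
      ∀ (U V : Type) [Fintype U] [Fintype V] (m : ℕ),
        Fintype.card U = m → Fintype.card V = n →
        ∀ R : Finset (U → V), ((q : ℝ) - 1 + ε) ^ m < (R.card : ℝ) →
          ∃ S : Finset U, δ * m ≤ (S.card : ℝ) ∧
            Shatters (R : Set (U → V)) S Finset.univ q :=
  stmt0_general n q hn hq2 ε hε
end

section
/- Suppose a subset S of a finite set U with |S| = s is (L, q)-shattered by a family R of functions from U to V, where L ⊆ V. Then there exist a q-element subset L' ⊆ L and a subset S' ⊆ S with |S'| ≥ s / C(|L|, q) such that S' is (L', q)-shattered by R; in particular, every function from S' to L' occurs as the restriction of some element of R. -/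
/-!
Each point `x ∈ S` sees a palette `{c₁ x, …, c_q x}` of `q` distinct colours from `L`, i.e. one of
the `C(|L|, q)` elements of `L.powersetCard q`. By pigeonhole some `L'` is the palette of at least
`s / C(|L|, q)` points; on that fibre the same `c` witnesses `(L', q)`-shattering. When `|L'| = q`
the palette at each point is all of `L'`, so any `g : S' → L'` is `c_{h(x)}(x)` for a suitable `h`.
-/

open Finset hiding Shatters

section

variable {U V : Type*} {R : Set (U → V)} {S S' : Finset U} {L L' : Finset V} {q : ℕ}

def palette [DecidableEq V] (c : Fin q → U → V) (x : U) : Finset V :=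
  univ.image (c · x)

theorem card_palette [DecidableEq V] {c : Fin q → U → V} {x : U}
    (hc : ∀ i j, i ≠ j → c i x ≠ c j x) : (palette c x).card = q := by
  rw [palette, card_image_of_injective _ fun i j hij => not_imp_not.mp (hc i j) hij,
    card_univ, Fintype.card_fin]

theorem palette_mem_powersetCard [DecidableEq V] {c : Fin q → U → V} {x : U}
    (hL : ∀ i, c i x ∈ L) (hc : ∀ i j, i ≠ j → c i x ≠ c j x) :
    palette c x ∈ L.powersetCard q :=
  mem_powersetCard.mpr ⟨fun _ hv => by
    obtain ⟨i, -, rfl⟩ := mem_image.mp hv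
    exact hL i, card_palette hc⟩

theorem Shatters.of_palette_eq [DecidableEq V] {c : Fin q → U → V}
    (hc : ∀ x ∈ S, ∀ i j : Fin q, i ≠ j → c i x ≠ c j x)
    (hR : ∀ h : U → Fin q, ∃ f ∈ R, ∀ x ∈ S, f x = c (h x) x)
    (hS' : S' ⊆ S) (hpal : ∀ x ∈ S', palette c x = L') : Shatters R S' L' q := by
  refine ⟨c, fun i x hx => ?_, fun x hx => hc x (hS' hx), fun h => ?_⟩
  · rw [← hpal x hx]
    exact mem_image_of_mem _ (mem_univ i)
  · obtain ⟨f, hf, hfc⟩ := hR h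
    exact ⟨f, hf, fun x hx => hfc x (hS' hx)⟩

theorem Shatters.exists_eqOn_of_card_eq (h : Shatters R S L q) (hL : L.card = q) (hq : 0 < q)
    (g : U → V) (hg : ∀ x ∈ S, g x ∈ L) : ∃ f ∈ R, ∀ x ∈ S, f x = g x := by
  classical
  obtain ⟨c, hcL, hc, hR⟩ := h
  have hpal : ∀ x ∈ S, palette c x = L := fun x hx =>
    eq_of_subset_of_card_le (mem_powersetCard.mp
      (palette_mem_powersetCard (hcL · x hx) (hc x hx))).1 (by rw [hL, card_palette (hc x hx)])
  have hcolour : ∀ x ∈ S, ∃ i, c i x = g x := fun x hx => by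
    have hgx := hg x hx
    rw [← hpal x hx] at hgx
    simpa [palette] using hgx
  let colour : U → Fin q := fun x => if hx : x ∈ S then (hcolour x hx).choose else ⟨0, hq⟩
  obtain ⟨f, hf, hfc⟩ := hR colour
  refine ⟨f, hf, fun x hx => ?_⟩
  rw [hfc x hx, show colour x = (hcolour x hx).choose from dif_pos hx]
  exact (hcolour x hx).choose_spec

end

theorem stmt3 {U V : Type*} [DecidableEq V]
    (R : Set (U → V)) (S : Finset U) (L : Finset V) (q s : ℕ)
    (hq2 : 2 ≤ q) (hqL : q ≤ L.card) (hS : S.card = s)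
    (hshat : Shatters R S L q) :
    ∃ L' ⊆ L, L'.card = q ∧ ∃ S' ⊆ S,
      (s : ℝ) / (L.card.choose q) ≤ (S'.card : ℝ) ∧
      Shatters R S' L' q ∧
      ∀ g : U → V, (∀ x ∈ S', g x ∈ L') → ∃ f ∈ R, ∀ x ∈ S', f x = g x := by
  obtain ⟨c, hcL, hc, hR⟩ := hshat
  have hcount : (L.powersetCard q).card • ((s : ℝ) / L.card.choose q) ≤ S.card := by
    have hC : (L.card.choose q : ℝ) ≠ 0 := by exact_mod_cast (Nat.choose_pos hqL).ne'
    rw [card_powersetCard, nsmul_eq_mul, mul_div_cancel₀ _ hC, hS]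
  obtain ⟨L', hL', hfibre⟩ := exists_le_card_fiber_of_nsmul_le_card_of_maps_to
    (fun x hx => palette_mem_powersetCard (hcL · x hx) (hc x hx))
    (powersetCard_nonempty.mpr hqL) hcount
  obtain ⟨hL'L, hL'q⟩ := mem_powersetCard.mp hL'
  have hshat' : Shatters R (S.filter (palette c · = L')) L' q :=
    Shatters.of_palette_eq hc hR (filter_subset _ _) fun x hx => (mem_filter.mp hx).2
  exact ⟨L', hL'L, hL'q, _, filter_subset _ _, hfibre, hshat',
    hshat'.exists_eqOn_of_card_eq hL'q (by omega)⟩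
end

section
/- Let I' be a uniformly random element of [k]^ℓ, and define P(I) = max_{i ∈ [k]} |{j ∈ [ℓ] : I_j = i}|. Then E[P(I')] ≤ ℓ/k + sqrt(kπℓ) + k·2^{-ℓ/k} / ln 2. -/
/-!
Exponential moments: for `c = eᵗ` one has `c ^ P(I) ≤ ∑ᵢ c ^ Qᵢ(I)`, and summing over all `I`
factorises, `∑_I c ^ Qᵢ(I) = (k - 1 + c) ^ ℓ`. Jensen's inequality for `log` then gives
`t · E[P] ≤ log k + ℓ log(1 + (eᵗ - 1) / k) ≤ log k + ℓ (t + t²) / k` for `0 < t ≤ 1`.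
With `t = 1` when `ℓ ≤ k log k` and `t = √(k log k / ℓ)` otherwise, `E[P] - ℓ / k` is at most
`2 log k ≤ √(π k)`, resp. `2 √(ℓ log k / k) ≤ √(π k ℓ)`.
-/

open Finset Real

section BallsIntoBins

variable {α β : Type*} [Fintype α] [Fintype β] [DecidableEq α]

def maxLoad (I : β → α) : ℕ := univ.sup fun i => #{j | I j = i}

lemma maxLoad_le_card (I : β → α) : maxLoad I ≤ Fintype.card β :=
  Finset.sup_le fun _ _ => card_filter_le _ _

lemma pow_maxLoad_le_sum [Nonempty α] {c : ℝ} (hc : 0 ≤ c) (I : β → α) :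
    c ^ maxLoad I ≤ ∑ i, c ^ #{j | I j = i} := by
  obtain ⟨i, -, hi⟩ := exists_mem_eq_sup univ univ_nonempty fun i => #{j | I j = i}
  rw [maxLoad, hi]
  exact single_le_sum (f := fun i => c ^ #{j | I j = i}) (fun i _ => pow_nonneg hc _) (mem_univ i)

lemma sum_pow_card_fiber [DecidableEq β] {R : Type*} [CommRing R] (c : R) (a : α) :
    ∑ I : β → α, c ^ #{j | I j = a} = ((Fintype.card α : R) - 1 + c) ^ Fintype.card β := by
  have hfiber (I : β → α) : c ^ #{j | I j = a} = ∏ j, if I j = a then c else 1 := by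
    rw [← prod_filter, prod_const]
  have hrow : ∑ b : α, (if b = a then c else 1) = (Fintype.card α : R) - 1 + c := by
    rw [← sum_erase_add _ _ (mem_univ a), if_pos rfl,
      sum_congr rfl fun b hb => if_neg (ne_of_mem_erase hb), sum_const,
      card_erase_of_mem (mem_univ a), card_univ, nsmul_one,
      Nat.cast_pred (Fintype.card_pos_iff.mpr ⟨a⟩)]
  simp only [hfiber, ← Fintype.prod_sum (fun (_ : β) (b : α) => if b = a then c else 1), hrow,
    prod_const, card_univ]

lemma average_log_le_log_average {ι : Type*} [Fintype ι] [Nonempty ι] {f : ι → ℝ}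
    (hf : ∀ i, 0 < f i) :
    (∑ i, log (f i)) / Fintype.card ι ≤ log ((∑ i, f i) / Fintype.card ι) := by
  have hn : (0 : ℝ) < Fintype.card ι := by exact_mod_cast Fintype.card_pos
  have hjensen := strictConcaveOn_log_Ioi.concaveOn.le_map_sum (t := univ)
    (w := fun _ => (Fintype.card ι : ℝ)⁻¹) (p := f) (fun _ _ => by positivity)
    (by simp [card_univ, hn.ne']) (fun i _ => hf i)
  simpa [← mul_sum, div_eq_inv_mul] using hjensen

lemma average_maxLoad_mul_log_le [DecidableEq β] [Nonempty α] {c : ℝ} (hc : 0 < c) :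
    (∑ I : β → α, (maxLoad I : ℝ)) / (Fintype.card α : ℝ) ^ Fintype.card β * log c ≤
      log (Fintype.card α) +
        Fintype.card β * log (((Fintype.card α : ℝ) - 1 + c) / Fintype.card α) := by
  set n : ℝ := (Fintype.card α : ℝ)
  set m := Fintype.card β
  have hn : 1 ≤ n := Nat.one_le_cast.mpr Fintype.card_pos
  set S : (β → α) → ℝ := fun I => ∑ i, c ^ #{j | I j = i}
  have hS (I : β → α) : 0 < S I := sum_pos (fun i _ => pow_pos hc _) univ_nonempty
  have hpoint (I : β → α) : (maxLoad I : ℝ) * log c ≤ log (S I) := by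
    rw [← log_pow]
    exact log_le_log (pow_pos hc _) (pow_maxLoad_le_sum hc.le I)
  have hsum : ∑ I, S I = n * (n - 1 + c) ^ m := by
    simp only [S]
    rw [sum_comm, sum_congr rfl fun a _ => sum_pow_card_fiber c a, sum_const, card_univ,
      nsmul_eq_mul]
  have hcard : (Fintype.card (β → α) : ℝ) = n ^ m := by simp [n, m]
  calc (∑ I, (maxLoad I : ℝ)) / n ^ m * log c = (∑ I, (maxLoad I : ℝ) * log c) / n ^ m := by
        rw [div_mul_eq_mul_div, sum_mul]
    _ ≤ (∑ I, log (S I)) / n ^ m := by gcongr with I; exact hpoint I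
    _ ≤ log ((∑ I, S I) / n ^ m) := by rw [← hcard]; exact average_log_le_log_average hS
    _ = log n + m * log ((n - 1 + c) / n) := by
        rw [hsum, mul_div_assoc, ← div_pow, log_mul (by positivity) (by positivity), log_pow]

lemma average_maxLoad_le [DecidableEq β] [Nonempty α] {t : ℝ} (ht0 : 0 < t) (ht1 : t ≤ 1) :
    (∑ I : β → α, (maxLoad I : ℝ)) / (Fintype.card α : ℝ) ^ Fintype.card β ≤
      Fintype.card β / Fintype.card α + log (Fintype.card α) / t +
        t * Fintype.card β / Fintype.card α := by
  set n : ℝ := (Fintype.card α : ℝ)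
  set m : ℝ := (Fintype.card β : ℝ)
  have hn : 1 ≤ n := Nat.one_le_cast.mpr Fintype.card_pos
  have hexp : exp t - 1 ≤ t + t ^ 2 := by
    linarith [(abs_le.mp (abs_exp_sub_one_sub_id_le (abs_le.mpr ⟨by linarith, ht1⟩))).2]
  have hlog : log ((n - 1 + exp t) / n) ≤ (t + t ^ 2) / n := by
    have hpos : 0 < (n - 1 + exp t) / n := by positivity
    calc log ((n - 1 + exp t) / n) ≤ (n - 1 + exp t) / n - 1 := log_le_sub_one_of_pos hpos
      _ = (exp t - 1) / n := by field_simp; ring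
      _ ≤ (t + t ^ 2) / n := by gcongr
  have hmgf := average_maxLoad_mul_log_le (α := α) (β := β) (exp_pos t)
  rw [log_exp, ← le_div_iff₀ ht0] at hmgf
  refine hmgf.trans ?_
  calc (log n + m * log ((n - 1 + exp t) / n)) / t ≤ (log n + m * ((t + t ^ 2) / n)) / t := by
        gcongr
    _ = m / n + log n / t + t * m / n := by field_simp; ring

end BallsIntoBins

lemma two_mul_log_le_sqrt_pi_mul {x : ℝ} (hx : 0 < x) : 2 * log x ≤ √(π * x) := by
  have hs : 0 < √x := sqrt_pos.mpr hx
  have hlog : log √x ≤ √x / exp 1 := by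
    have := log_le_sub_one_of_pos (div_pos hs (exp_pos 1))
    rw [log_div hs.ne' (exp_pos 1).ne', log_exp] at this
    linarith
  have he : 4 / exp 1 ≤ √π := by
    have hpi : (1.7 : ℝ) ≤ √π := le_sqrt_of_sq_le (by nlinarith [pi_gt_three])
    rw [div_le_iff₀ (exp_pos 1)]
    nlinarith [exp_one_gt_d9]
  calc 2 * log x = 4 * log √x := by rw [log_sqrt hx.le]; ring
    _ ≤ 4 * (√x / exp 1) := by linarith
    _ = 4 / exp 1 * √x := by ring
    _ ≤ √π * √x := by gcongr
    _ = √(π * x) := (sqrt_mul pi_pos.le x).symm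

lemma div_sqrt_div_add_sqrt_div_mul {a b : ℝ} (ha : 0 < a) (hb : 0 < b) :
    a / √(a / b) + √(a / b) * b = 2 * √(a * b) := by
  have hs : 0 < √(a / b) := sqrt_pos.mpr (div_pos ha hb)
  have hsq : √(a / b) ^ 2 = a / b := sq_sqrt (div_pos ha hb).le
  have hab : √(a * b) = √(a / b) * b := by
    rw [show a * b = a / b * b ^ 2 by field_simp, sqrt_mul (div_pos ha hb).le, sqrt_sq hb.le]
  have hdiv : a / √(a / b) = √(a / b) * b := by
    rw [div_eq_iff hs.ne', mul_right_comm, ← pow_two, hsq, div_mul_cancel₀ a hb.ne']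
  rw [hab, hdiv]
  ring

theorem stmt6 (k ℓ : ℕ) (hk : 1 ≤ k) (hℓ : 1 ≤ ℓ) :
    (∑ I : Fin ℓ → Fin k,
        (((Finset.univ.sup fun i : Fin k =>
          (Finset.univ.filter fun j : Fin ℓ => I j = i).card) : ℕ) : ℝ)) /
        (k : ℝ) ^ ℓ ≤
      (ℓ : ℝ) / k + Real.sqrt (k * Real.pi * ℓ) +
        k * (2 : ℝ) ^ (-(ℓ : ℝ) / k) / Real.log 2 := by
  change (∑ I : Fin ℓ → Fin k, (maxLoad I : ℝ)) / (k : ℝ) ^ ℓ ≤ _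
  have : Nonempty (Fin k) := ⟨⟨0, hk⟩⟩
  have hslack : 0 ≤ k * (2 : ℝ) ^ (-(ℓ : ℝ) / k) / log 2 := by positivity
  have hℓ1 : (1 : ℝ) ≤ ℓ := by exact_mod_cast hℓ
  have hbound {t : ℝ} (ht0 : 0 < t) (ht1 : t ≤ 1) := by
    simpa only [Fintype.card_fin] using average_maxLoad_le (α := Fin k) (β := Fin ℓ) ht0 ht1
  obtain rfl | hk2 := hk.eq_or_lt
  · have hload : ∑ I : Fin ℓ → Fin 1, (maxLoad I : ℝ) ≤ ℓ := by
      calc ∑ I : Fin ℓ → Fin 1, (maxLoad I : ℝ) ≤ ∑ _I : Fin ℓ → Fin 1, (ℓ : ℝ) :=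
            sum_le_sum fun I _ => mod_cast (maxLoad_le_card I).trans_eq (Fintype.card_fin ℓ)
        _ = ℓ := by simp
    simp only [Nat.cast_one, one_pow, div_one] at hslack ⊢
    linarith [sqrt_nonneg (1 * π * ℓ)]
  have hk1 : (1 : ℝ) < k := by exact_mod_cast hk2
  have hk0 : (0 : ℝ) < k := by linarith
  have hlogk : 0 < log k := log_pos hk1
  rcases le_total ((ℓ : ℝ) / k) (log k) with hsmall | hlarge
  · have hsqrt : √(π * k) ≤ √(k * π * ℓ) := sqrt_le_sqrt <| by
      simpa [mul_comm] using mul_le_mul_of_nonneg_left hℓ1 (by positivity : 0 ≤ k * π)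
    have h1 := hbound one_pos le_rfl
    have h2 := two_mul_log_le_sqrt_pi_mul hk0
    simp only [div_one, one_mul] at h1
    linarith
  · set t := √(log k / (ℓ / k))
    have ht0 : 0 < t := sqrt_pos.mpr (by positivity)
    have ht1 : t ≤ 1 := sqrt_le_one.mpr ((div_le_one (by positivity)).mpr hlarge)
    have hopt : log k / t + t * ℓ / k ≤ √(k * π * ℓ) := by
      rw [mul_div_assoc, div_sqrt_div_add_sqrt_div_mul hlogk (by positivity),
        ← sqrt_sq zero_le_two, ← sqrt_mul (by positivity)]
      refine sqrt_le_sqrt ?_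
      calc 2 ^ 2 * (log k * (ℓ / k)) = 4 * log k / k ^ 2 * (k * ℓ) := by field_simp; norm_num
        _ ≤ π * (k * ℓ) := by
          gcongr
          rw [div_le_iff₀ (by positivity)]
          nlinarith [log_le_sub_one_of_pos hk0, pi_gt_three]
        _ = k * π * ℓ := by ring
    linarith [hbound ht0 ht1]
end

section
/- Let {(T_1^i, ..., T_k^i) : i ∈ [ℓ]} be ℓ covering k-partitions of an m-element set M that are ε-apart, and let v^j be the perfect valuation profile generated by the j-th partition (player i values item x at 1 if x ∈ T_i^j, else 0). Then for any single allocation R of M to [k] (a partial function from M to [k]), the sum over j ∈ [ℓ] of the social welfare of R under v^j is at most (1/k + sqrt(kπ/ℓ) + k·2^{-ℓ/k}/(ℓ·ln 2))·(1+ε)·ℓm, i.e., at most that fraction of the sum ℓm of the optimal social welfares. -/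
/-!
Read the ℓ partitions as assigning to every item `x` a label vector `I x : Fin ℓ → Fin k`.
An allocation giving `x` to player `a` collects, over the ℓ profiles, exactly the number of
coordinates of `I x` equal to `a`, i.e. the occupancy of bin `a` when ℓ balls are thrown into
k bins along `I x`. Since the partitions are ε-apart, every label vector is carried by at most
`(1/k)^ℓ (1+ε) m` items, so the total welfare is at most `(1/k)^ℓ (1+ε) m` times the sum over all
`k^ℓ` label vectors of their maximal occupancy, i.e. `(1+ε) m` times the expected maximal
occupancy. The maximal occupancy exceeds `ℓ/k` by at most the Euclidean distance of the occupancy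
vector from the uniform one, whose mean square is `ℓ (1 - 1/k)`; by Cauchy–Schwarz the expected
maximal occupancy is at most `ℓ/k + √ℓ ≤ ℓ/k + √(kπℓ)`.
-/

open Finset Fintype

section Occupancy

variable {ι α : Type*} [Fintype ι] [Fintype α] [DecidableEq α]

def occupancy (I : ι → α) (a : α) : ℕ := #{j | I j = a}

lemma sum_occupancy (I : ι → α) : ∑ a, occupancy I a = card ι :=
  (card_eq_sum_card_fiberwise fun _ _ ↦ mem_univ _).symm

lemma sum_occupancy_sq (I : ι → α) : ∑ a, occupancy I a ^ 2 = ∑ j, occupancy I (I j) := by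
  rw [← sum_fiberwise' univ I (occupancy I)]
  simp [occupancy, sq]

noncomputable def occupancyDeviation (I : ι → α) : ℝ :=
  √(∑ a, ((occupancy I a : ℝ) - card ι / card α) ^ 2)

lemma occupancyDeviation_nonneg (I : ι → α) : 0 ≤ occupancyDeviation I :=
  Real.sqrt_nonneg _

lemma occupancy_le_add_occupancyDeviation (I : ι → α) (a : α) :
    (occupancy I a : ℝ) ≤ card ι / card α + occupancyDeviation I := by
  have hsq : ((occupancy I a : ℝ) - card ι / card α) ^ 2 ≤
      ∑ b, ((occupancy I b : ℝ) - card ι / card α) ^ 2 :=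
    single_le_sum (f := fun b ↦ ((occupancy I b : ℝ) - card ι / card α) ^ 2)
      (fun _ _ ↦ sq_nonneg _) (mem_univ a)
  have := (le_abs_self _).trans (Real.abs_le_sqrt hsq)
  unfold occupancyDeviation
  linarith

lemma card_filter_eq_some_le (o : Option α) (I : ι → α) :
    (#{j | o = some (I j)} : ℝ) ≤ card ι / card α + occupancyDeviation I := by
  cases o with
  | none => simpa using add_nonneg (by positivity) (occupancyDeviation_nonneg I)
  | some a =>
    simp only [Option.some_inj, eq_comm (a := a)]
    exact occupancy_le_add_occupancyDeviation I a

variable [DecidableEq ι]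

def subtypeApplyEqApplyProdEquiv {j j' : ι} (h : j ≠ j') :
    {I : ι → α // I j = I j'} × α ≃ (ι → α) where
  toFun p := Function.update p.1.1 j' p.2
  invFun J := (⟨Function.update J j' (J j), by simp [h]⟩, J j')
  left_inv := fun ⟨⟨I, hI⟩, c⟩ ↦ by simp [h, hI]
  right_inv J := by simp

lemma card_filter_apply_eq_apply_mul_card {j j' : ι} (h : j ≠ j') :
    #{I : ι → α | I j = I j'} * card α = card α ^ card ι := by
  rw [← card_fun, ← card_congr (subtypeApplyEqApplyProdEquiv h), card_prod, Fintype.card_subtype]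

lemma card_mul_sum_occupancy_apply (j : ι) :
    (card α : ℝ) * ∑ I : ι → α, (occupancy I (I j) : ℝ) =
      card α ^ card ι * (card ι + card α - 1) := by
  have hcount (j' : ι) : (card α : ℝ) * #{I : ι → α | I j' = I j} =
      card α ^ card ι * (1 + if j' = j then (card α - 1 : ℝ) else 0) := by
    split_ifs with hj
    · subst hj
      simp only [filter_true, card_univ, card_fun, Nat.cast_pow, add_sub_cancel]
      ring
    · rw [add_zero, mul_one, mul_comm]
      exact_mod_cast card_filter_apply_eq_apply_mul_card hj
  calc (card α : ℝ) * ∑ I : ι → α, (occupancy I (I j) : ℝ)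
      = ∑ j', (card α : ℝ) * #{I : ι → α | I j' = I j} := by
        simp only [occupancy, card_filter, Nat.cast_sum, Nat.cast_ite, Nat.cast_one,
          Nat.cast_zero, ← mul_sum]
        rw [sum_comm]
    _ = card α ^ card ι * (card ι + card α - 1) := by
        simp only [hcount, ← mul_sum, sum_add_distrib, sum_const, card_univ, Fintype.sum_ite_eq',
          nsmul_eq_mul]
        ring

lemma sum_sum_occupancy_sq [Nonempty α] :
    ∑ I : ι → α, ∑ a, (occupancy I a : ℝ) ^ 2 =
      card α ^ card ι * card ι * (card ι + card α - 1) / card α := by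
  rw [eq_div_iff (by positivity)]
  simp only [← Nat.cast_pow, ← Nat.cast_sum, sum_occupancy_sq]
  push_cast
  rw [sum_comm, sum_mul,
    Fintype.sum_congr _ _ fun j ↦ (mul_comm _ _).trans (card_mul_sum_occupancy_apply j),
    sum_const, card_univ, nsmul_eq_mul]
  ring

lemma sum_sum_occupancy_sub_sq [Nonempty α] :
    ∑ I : ι → α, ∑ a, ((occupancy I a : ℝ) - card ι / card α) ^ 2 =
      card α ^ card ι * card ι * (1 - (card α : ℝ)⁻¹) := by
  have hsum (I : ι → α) : ∑ a, (occupancy I a : ℝ) = card ι := by exact_mod_cast sum_occupancy I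
  have hexpand (I : ι → α) : ∑ a, ((occupancy I a : ℝ) - card ι / card α) ^ 2 =
      ∑ a, (occupancy I a : ℝ) ^ 2 - card ι ^ 2 / card α := by
    simp only [sub_sq, sum_add_distrib, sum_sub_distrib, ← sum_mul, ← mul_sum, hsum,
      sum_const, card_univ, nsmul_eq_mul]
    field_simp
    ring
  simp only [hexpand, sum_sub_distrib, sum_sum_occupancy_sq, sum_const, card_univ, card_fun,
    nsmul_eq_mul]
  push_cast
  field_simp
  ring

lemma sum_occupancyDeviation_le [Nonempty α] :
    ∑ I : ι → α, occupancyDeviation I ≤ card α ^ card ι * √(card ι) := by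
  have hcs := Real.sum_sqrt_mul_sqrt_le univ
    (f := fun I : ι → α ↦ ∑ a, ((occupancy I a : ℝ) - card ι / card α) ^ 2) (g := fun _ ↦ 1)
    (fun _ ↦ sum_nonneg fun _ _ ↦ sq_nonneg _) (fun _ ↦ zero_le_one)
  simp only [Real.sqrt_one, mul_one, sum_const, card_univ, card_fun, nsmul_eq_mul,
    Nat.cast_pow] at hcs
  have hvar : ∑ I : ι → α, ∑ a, ((occupancy I a : ℝ) - card ι / card α) ^ 2 ≤
      card α ^ card ι * card ι := by
    rw [sum_sum_occupancy_sub_sq]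
    exact mul_le_of_le_one_right (by positivity) (sub_le_self _ (by positivity))
  calc ∑ I : ι → α, occupancyDeviation I
      ≤ √(card α ^ card ι * card ι) * √(card α ^ card ι) :=
        hcs.trans (mul_le_mul_of_nonneg_right (Real.sqrt_le_sqrt hvar) (Real.sqrt_nonneg _))
    _ = card α ^ card ι * √(card ι) := by
        rw [Real.sqrt_mul (by positivity), mul_right_comm, Real.mul_self_sqrt (by positivity)]

end Occupancy

lemma sum_comp_le_of_card_fiber_le {β γ : Type*} [Fintype β] [Fintype γ] [DecidableEq γ]
    (L : β → γ) {g : γ → ℝ} (hg : ∀ y, 0 ≤ g y) {B : ℝ} (hB : ∀ y, (#{x | L x = y} : ℝ) ≤ B) :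
    ∑ x, g (L x) ≤ B * ∑ y, g y := by
  rw [← sum_fiberwise' univ L g, mul_sum]
  gcongr with y
  rw [sum_const, nsmul_eq_mul]
  exact mul_le_mul_of_nonneg_right (hB y) (hg y)

lemma sqrt_le_sqrt_mul_pi_div_mul {k : ℕ} (hk : 1 ≤ k) (ℓ : ℕ) :
    √ℓ ≤ √(k * Real.pi / ℓ) * ℓ := by
  rcases eq_or_ne (ℓ : ℝ) 0 with h | h
  · simp [h]
  have hℓ : (ℓ : ℝ) = √(ℓ ^ 2) := (Real.sqrt_sq (Nat.cast_nonneg ℓ)).symm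
  rw [hℓ, ← Real.sqrt_mul (by positivity), ← hℓ]
  apply Real.sqrt_le_sqrt
  have hkπ : (1 : ℝ) ≤ k * Real.pi := one_le_mul_of_one_le_of_one_le (by exact_mod_cast hk)
    (by linarith [Real.pi_gt_three])
  have : k * Real.pi / ℓ * ℓ ^ 2 = k * Real.pi * ℓ := by field_simp
  rw [this]
  exact le_mul_of_one_le_left (Nat.cast_nonneg ℓ) hkπ

theorem stmt7_general (k ℓ m : ℕ) (hk : 1 ≤ k) (ε : ℝ) (hε : 0 < ε)
    (T : Fin ℓ → Fin m → Fin k)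
    -- the ℓ covering k-partitions (as labelling functions) are ε-apart
    (hapart : ∀ I : Fin ℓ → Fin k,
      ((Finset.univ.filter fun x : Fin m => ∀ i, T i x = I i).card : ℝ) ≤
        ((1 : ℝ) / k) ^ ℓ * (1 + ε) * m)
    -- a single (partial) allocation of the items to the k players
    (R : Fin m → Option (Fin k)) :
    -- the total welfare of R over the ℓ generated perfect valuation profiles
    (∑ j : Fin ℓ,
        ((Finset.univ.filter fun x : Fin m => R x = some (T j x)).card : ℝ)) ≤
      ((1 : ℝ) / k + Real.sqrt (k * Real.pi / ℓ) +
        k * (2 : ℝ) ^ (-(ℓ : ℝ) / k) / (ℓ * Real.log 2)) * (1 + ε) * (ℓ * m) := by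
  have : Nonempty (Fin k) := ⟨⟨0, hk⟩⟩
  have hfiber (I : Fin ℓ → Fin k) :
      (#{x | Function.swap T x = I} : ℝ) ≤ (1 / k) ^ ℓ * (1 + ε) * m := by
    simpa only [funext_iff, Function.swap] using hapart I
  have hbound : 0 ≤ k * (2 : ℝ) ^ (-(ℓ : ℝ) / k) / (ℓ * Real.log 2) := by positivity
  calc ∑ j : Fin ℓ, (#{x | R x = some (T j x)} : ℝ)
      = ∑ x, (#{j | R x = some (Function.swap T x j)} : ℝ) := by
        exact_mod_cast sum_card_bipartiteAbove_eq_sum_card_bipartiteBelow _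
    _ ≤ ∑ x, (ℓ / k + occupancyDeviation (Function.swap T x)) := by
        gcongr with x
        simpa using card_filter_eq_some_le (R x) (Function.swap T x)
    _ ≤ (1 / k) ^ ℓ * (1 + ε) * m * ∑ I : Fin ℓ → Fin k, (ℓ / k + occupancyDeviation I) :=
        sum_comp_le_of_card_fiber_le _ (g := fun I ↦ ℓ / k + occupancyDeviation I)
          (fun I ↦ add_nonneg (by positivity) (occupancyDeviation_nonneg I)) hfiber
    _ ≤ (1 / k) ^ ℓ * (1 + ε) * m * (k ^ ℓ * (ℓ / k + √ℓ)) := by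
        gcongr
        simpa [sum_add_distrib, mul_add] using sum_occupancyDeviation_le (ι := Fin ℓ) (α := Fin k)
    _ = (1 + ε) * m * (ℓ / k + √ℓ) := by
        rw [div_pow, one_pow]
        field_simp
    _ ≤ (1 + ε) * m * ((1 / k + √(k * Real.pi / ℓ) +
          k * (2 : ℝ) ^ (-(ℓ : ℝ) / k) / (ℓ * Real.log 2)) * ℓ) := by
        gcongr
        rw [add_mul, add_mul, one_div_mul_eq_div]
        linarith [sqrt_le_sqrt_mul_pi_div_mul hk ℓ, mul_nonneg hbound (Nat.cast_nonneg (α := ℝ) ℓ)]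
    _ = _ := by ring

theorem stmt7 (k ℓ m : ℕ) (hk : 1 ≤ k) (hℓ : 1 ≤ ℓ) (ε : ℝ) (hε : 0 < ε)
    (T : Fin ℓ → Fin m → Fin k)
    -- the ℓ covering k-partitions (as labelling functions) are ε-apart
    (hapart : ∀ I : Fin ℓ → Fin k,
      ((Finset.univ.filter fun x : Fin m => ∀ i, T i x = I i).card : ℝ) ≤
        ((1 : ℝ) / k) ^ ℓ * (1 + ε) * m)
    -- a single (partial) allocation of the items to the k players
    (R : Fin m → Option (Fin k)) :
    -- the total welfare of R over the ℓ generated perfect valuation profiles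
    (∑ j : Fin ℓ,
        ((Finset.univ.filter fun x : Fin m => R x = some (T j x)).card : ℝ)) ≤
      ((1 : ℝ) / k + Real.sqrt (k * Real.pi / ℓ) +
        k * (2 : ℝ) ^ (-(ℓ : ℝ) / k) / (ℓ * Real.log 2)) * (1 + ε) * (ℓ * m) :=
  stmt7_general k ℓ m hk ε hε T hapart R
end

section
/- Let M be a finite set of items and N = [k] a set of players. Suppose valuations v_i : 2^{M_1} → ℝ≥0 on a set M_1 with max_i v_i(M_1) = 1, and let v'_i be a perfect valuation profile on a disjoint set M_2 with |M_2| = m'. Define hybrid valuations v*_i(S) = v_i(S ∩ M_1) + γ·v'_i(S ∩ M_2) with γ = 4k/(ε m'). Let OPT, OPT', OPT* be the optimal social welfares under v, v', v* respectively. Then OPT* = OPT + γ·OPT', and for any allocation S and any β ≥ 0, if v*(S) ≥ β·OPT* then v'(S) ≥ (β − ε/2)·OPT'. -/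
/-!
Optimal hybrid welfare is attained by taking an optimal allocation of `M₁` and handing each
item of `M₂` to the one player who values it; as no allocation earns more than `m'` from the
perfect profile, `OPT* = OPT + γ m'`. Welfare under `v` is at most `k = γ · ε m' / 4`, so an
allocation reaching `β · OPT*` can fall short of `β m'` in perfect welfare by at most `ε m' / 4`.
-/

open Finset Function

section PerfectProfile

variable {α ι : Type*} [DecidableEq α] [DecidableEq ι]

theorem sum_card_filter_inter_le [Fintype ι] (S : ι → Finset α) (M : Finset α) (p : α → ι) :
    ∑ i, ((S i ∩ M).filter fun x => p x = i).card ≤ M.card := by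
  rw [card_eq_sum_card_fiberwise fun x _ => mem_univ (p x)]
  exact sum_le_sum fun i _ => card_le_card (filter_subset_filter _ inter_subset_right)

theorem sum_card_filter_inter_eq_card [Fintype ι] {S : ι → Finset α} {M : Finset α} {p : α → ι}
    (h : ∀ i, M.filter (fun x => p x = i) ⊆ S i) :
    ∑ i, ((S i ∩ M).filter fun x => p x = i).card = M.card := by
  rw [card_eq_sum_card_fiberwise fun x _ => mem_univ (p x)]
  exact sum_congr rfl fun i _ => by rw [← inter_filter, inter_eq_right.2 (h i)]

def hybridAllocation (S : ι → Finset α) (M₁ M₂ : Finset α) (p : α → ι) : ι → Finset α :=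
  fun i => S i ∩ M₁ ∪ M₂.filter fun x => p x = i

variable {S : ι → Finset α} {M₁ M₂ : Finset α} {p : α → ι}

theorem hybridAllocation_subset (i : ι) : hybridAllocation S M₁ M₂ p i ⊆ M₁ ∪ M₂ :=
  union_subset_union inter_subset_right (filter_subset _ _)

theorem filter_subset_hybridAllocation (i : ι) :
    M₂.filter (fun x => p x = i) ⊆ hybridAllocation S M₁ M₂ p i :=
  subset_union_right

theorem hybridAllocation_inter_left (hdisj : Disjoint M₁ M₂) (i : ι) :
    hybridAllocation S M₁ M₂ p i ∩ M₁ = S i ∩ M₁ := by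
  rw [hybridAllocation, union_inter_distrib_right, inter_assoc, inter_self,
    disjoint_iff_inter_eq_empty.1 (hdisj.symm.mono_left (filter_subset _ M₂)), union_empty]

theorem hybridAllocation_pairwise_disjoint (hS : Pairwise (Disjoint on S))
    (hdisj : Disjoint M₁ M₂) : Pairwise (Disjoint on (hybridAllocation S M₁ M₂ p)) := by
  intro i j hij
  have hM₂ : Disjoint (M₂.filter fun x => p x = i) (M₂.filter fun x => p x = j) :=
    disjoint_filter_filter' _ _ fun _ hi hj x hx => hij ((hi x hx).symm.trans (hj x hx))
  have hcross : ∀ l l', Disjoint (S l ∩ M₁) (M₂.filter fun x => p x = l') := fun _ _ =>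
    hdisj.mono inter_subset_right (filter_subset _ _)
  simp only [onFun, hybridAllocation, disjoint_union_left, disjoint_union_right]
  exact ⟨⟨(hS hij).mono inter_subset_left inter_subset_left, (hcross j i).symm⟩,
    hcross i j, hM₂⟩

end PerfectProfile

theorem isGreatest_add_of_isGreatest {σ R : Type*} [AddCommMonoid R] [PartialOrder R]
    [IsOrderedAddMonoid R] {P : σ → Prop} {f g : σ → R} {a b : R}
    (hf : IsGreatest {w | ∃ s, P s ∧ w = f s} a) (hg : ∀ s, P s → g s ≤ b)
    (hboth : ∃ s, P s ∧ f s = a ∧ g s = b) :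
    IsGreatest {w | ∃ s, P s ∧ w = f s + g s} (a + b) := by
  obtain ⟨s, hs, hfs, hgs⟩ := hboth
  refine ⟨⟨s, hs, by rw [hfs, hgs]⟩, ?_⟩
  rintro _ ⟨t, ht, rfl⟩
  exact add_le_add (hf.2 ⟨t, ht, rfl⟩) (hg t ht)

theorem stmt12_general (k : ℕ) (hk : 1 ≤ k)
    (Item : Type) [DecidableEq Item]
    (M₁ M₂ : Finset Item) (hdisj : Disjoint M₁ M₂)
    (m' : ℕ) (hm' : M₂.card = m') (hm'pos : 1 ≤ m')
    (ε : ℝ) (hε0 : 0 < ε)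
    (γ : ℝ) (hγ : γ = 4 * k / (ε * m'))
    -- the original valuations on M₁: nonnegative, normalized monotone set functions
    (v : Fin k → Finset Item → ℝ)
    (hnonneg : ∀ i S, 0 ≤ v i S)
    (hmono : ∀ i, ∀ S T : Finset Item, S ⊆ T → v i S ≤ v i T)
    (hmax' : ∀ i, v i M₁ ≤ 1)
    -- the perfect valuation profile on M₂ is generated by the total allocation p
    (p : Item → Fin k)
    -- valid allocations: disjoint bundles of items
    (Valid : (Fin k → Finset Item) → Prop)
    (hValid : ∀ S, Valid S ↔ (∀ i, S i ⊆ M₁ ∪ M₂) ∧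
      ∀ i j, i ≠ j → Disjoint (S i) (S j))
    -- welfare under v, and under the perfect profile v'
    (wV wV' : (Fin k → Finset Item) → ℝ)
    (hwV : ∀ S, wV S = ∑ i, v i (S i ∩ M₁))
    (hwV' : ∀ S, wV' S = ∑ i, (((S i ∩ M₂).filter fun x => p x = i).card : ℝ))
    -- the optimal social welfares under v and under the hybrid v* = v ⊕ γ v'
    (OPT OPTstar : ℝ)
    (hOPT : IsGreatest {w : ℝ | ∃ S, Valid S ∧ w = wV S} OPT)
    (hOPTstar : IsGreatest {w : ℝ | ∃ S, Valid S ∧ w = wV S + γ * wV' S} OPTstar) :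
    OPTstar = OPT + γ * m' ∧
      ∀ S, Valid S → ∀ β : ℝ, 0 ≤ β →
        β * OPTstar ≤ wV S + γ * wV' S → (β - ε / 2) * m' ≤ wV' S := by
  have hm'R : (0 : ℝ) < m' := by exact_mod_cast hm'pos
  have hkR : (0 : ℝ) < k := by exact_mod_cast hk
  have hγpos : 0 < γ := by rw [hγ]; positivity
  have hkγ : γ * (ε * m' / 4) = k := by rw [hγ]; field_simp
  have hwV_le : ∀ S, wV S ≤ k := fun S => by
    simpa [hwV] using sum_le_card_nsmul univ _ 1 fun i _ =>
      (hmono i _ _ inter_subset_right).trans (hmax' i)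
  have hwV'_le : ∀ S, wV' S ≤ m' := fun S => by
    rw [hwV', ← hm']; exact_mod_cast sum_card_filter_inter_le S M₂ p
  obtain ⟨S₀, hS₀, hOPT_eq⟩ := hOPT.1
  have hOPT0 : 0 ≤ OPT := hOPT_eq ▸ hwV S₀ ▸ sum_nonneg fun i _ => hnonneg i _
  have hstar : OPTstar = OPT + γ * m' := by
    refine hOPTstar.unique (isGreatest_add_of_isGreatest hOPT
      (fun S _ => mul_le_mul_of_nonneg_left (hwV'_le S) hγpos.le) ?_)
    refine ⟨hybridAllocation S₀ M₁ M₂ p, (hValid _).2 ⟨hybridAllocation_subset,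
      hybridAllocation_pairwise_disjoint ((hValid S₀).1 hS₀).2 hdisj⟩, ?_, ?_⟩
    · simp only [hOPT_eq, hwV, hybridAllocation_inter_left hdisj]
    · rw [hwV', ← hm', ← Nat.cast_sum,
        sum_card_filter_inter_eq_card filter_subset_hybridAllocation]
  refine ⟨hstar, fun S _ β hβ hS => ?_⟩
  have hscaled : γ * (β * m') ≤ γ * (ε * m' / 4 + wV' S) := by
    rw [hstar] at hS; linarith [mul_nonneg hβ hOPT0, hwV_le S]
  have hβm := le_of_mul_le_mul_left hscaled hγpos
  linarith [mul_pos hε0 hm'R]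

theorem stmt12 (k : ℕ) (hk : 1 ≤ k)
    (Item : Type) [Fintype Item] [DecidableEq Item]
    (M₁ M₂ : Finset Item) (hdisj : Disjoint M₁ M₂)
    (m' : ℕ) (hm' : M₂.card = m') (hm'pos : 1 ≤ m')
    (ε : ℝ) (hε0 : 0 < ε) (hε1 : ε ≤ 1)
    (γ : ℝ) (hγ : γ = 4 * k / (ε * m')) (hγ1 : γ ≤ 1)
    -- the original valuations on M₁: nonnegative, normalized monotone set functions
    (v : Fin k → Finset Item → ℝ)
    (hv0 : ∀ i, v i ∅ = 0)
    (hnonneg : ∀ i S, 0 ≤ v i S)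
    (hmono : ∀ i, ∀ S T : Finset Item, S ⊆ T → v i S ≤ v i T)
    (hmax : ∃ i, v i M₁ = 1) (hmax' : ∀ i, v i M₁ ≤ 1)
    -- the perfect valuation profile on M₂ is generated by the total allocation p
    (p : Item → Fin k)
    -- valid allocations: disjoint bundles of items
    (Valid : (Fin k → Finset Item) → Prop)
    (hValid : ∀ S, Valid S ↔ (∀ i, S i ⊆ M₁ ∪ M₂) ∧
      ∀ i j, i ≠ j → Disjoint (S i) (S j))
    -- welfare under v, and under the perfect profile v'
    (wV wV' : (Fin k → Finset Item) → ℝ)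
    (hwV : ∀ S, wV S = ∑ i, v i (S i ∩ M₁))
    (hwV' : ∀ S, wV' S = ∑ i, (((S i ∩ M₂).filter fun x => p x = i).card : ℝ))
    -- the optimal social welfares under v and under the hybrid v* = v ⊕ γ v'
    (OPT OPTstar : ℝ)
    (hOPT : IsGreatest {w : ℝ | ∃ S, Valid S ∧ w = wV S} OPT)
    (hOPTstar : IsGreatest {w : ℝ | ∃ S, Valid S ∧ w = wV S + γ * wV' S} OPTstar) :
    OPTstar = OPT + γ * m' ∧
      ∀ S, Valid S → ∀ β : ℝ, 0 ≤ β →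
        β * OPTstar ≤ wV S + γ * wV' S → (β - ε / 2) * m' ≤ wV' S :=
  stmt12_general k hk Item M₁ M₂ hdisj m' hm' hm'pos ε hε0 γ hγ v hnonneg hmono hmax' p Valid hValid
    wV wV' hwV hwV' OPT OPTstar hOPT hOPTstar
end

section
/- In the setting of hybrid valuations v*_i = v_i ⊕ γ v'_i with γ = 4k/(ε m'), OPT' = m', 1 ≤ OPT ≤ k, and OPT* = OPT + γ·OPT': for any allocation S and any δ ≥ 0, if v*(S) ≥ (1 − δ)·OPT* then v(S) ≥ (1 − 5kδ/ε)·OPT. -/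
/-!
A disjoint allocation hands out at most `m'` items of `M₂` to the agents that value them, so
`γ v'(S) ≤ γ m' = 4k/ε` and `v(S) ≥ OPT - δ (OPT + 4k/ε)`. Since `k/ε ≥ 1` and `OPT ≥ 1`, the loss
`δ OPT + 4kδ/ε` is at most `kδ OPT/ε + 4kδ OPT/ε`.
-/

open Finset

theorem sum_card_le_card_of_pairwiseDisjoint {ι α : Type*} [DecidableEq α] {s : Finset ι}
    {t : ι → Finset α} {M : Finset α} (hdisj : (s : Set ι).PairwiseDisjoint t)
    (hsub : ∀ i ∈ s, t i ⊆ M) : ∑ i ∈ s, #(t i) ≤ #M := by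
  rw [← card_biUnion hdisj]
  exact card_le_card (biUnion_subset.mpr hsub)

theorem sum_card_filter_inter_le_card {ι α : Type*} [Fintype ι] [DecidableEq ι] [DecidableEq α]
    {S : ι → Finset α} (hS : ∀ i j, i ≠ j → Disjoint (S i) (S j)) (M : Finset α) (p : α → ι) :
    ∑ i, #((S i ∩ M).filter fun x => p x = i) ≤ #M :=
  sum_card_le_card_of_pairwiseDisjoint
    (fun i _ j _ hij =>
      disjoint_filter_filter ((hS i j hij).mono inter_subset_left inter_subset_left))
    (fun _ _ => (filter_subset _ _).trans inter_subset_right)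

theorem welfare_loss_le {k ε δ OPT : ℝ} (hk : 1 ≤ k) (hε0 : 0 < ε) (hε1 : ε ≤ 1)
    (hδ : 0 ≤ δ) (hOPT : 1 ≤ OPT) : δ * (OPT + 4 * k / ε) ≤ 5 * k * δ / ε * OPT := by
  have hkε : 1 ≤ k / ε := (one_le_div hε0).mpr (by linarith)
  have hOPT_le : OPT ≤ k / ε * OPT := le_mul_of_one_le_left (by linarith) hkε
  have hconst_le : 4 * k / ε ≤ 4 * k / ε * OPT :=
    le_mul_of_one_le_right (by positivity) hOPT
  calc δ * (OPT + 4 * k / ε) ≤ δ * (k / ε * OPT + 4 * k / ε * OPT) := by gcongr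
    _ = 5 * k * δ / ε * OPT := by ring

theorem stmt13_general (k : ℕ) (hk : 1 ≤ k)
    (Item : Type) [DecidableEq Item]
    (M₁ M₂ : Finset Item)
    (m' : ℕ) (hm' : M₂.card = m') (hm'pos : 1 ≤ m')
    (ε : ℝ) (hε0 : 0 < ε) (hε1 : ε ≤ 1)
    (γ : ℝ) (hγ : γ = 4 * k / (ε * m'))
    -- the perfect valuation profile on M₂ is generated by the total allocation p
    (p : Item → Fin k)
    (Valid : (Fin k → Finset Item) → Prop)
    (hValid : ∀ S, Valid S ↔ (∀ i, S i ⊆ M₁ ∪ M₂) ∧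
      ∀ i j, i ≠ j → Disjoint (S i) (S j))
    (wV wV' : (Fin k → Finset Item) → ℝ)
    (hwV' : ∀ S, wV' S = ∑ i, (((S i ∩ M₂).filter fun x => p x = i).card : ℝ))
    (OPT OPTstar : ℝ)
    (hOPT1 : 1 ≤ OPT)
    (hsum : OPTstar = OPT + γ * m') :
    ∀ S, Valid S → ∀ δ : ℝ, 0 ≤ δ →
      (1 - δ) * OPTstar ≤ wV S + γ * wV' S → (1 - 5 * k * δ / ε) * OPT ≤ wV S := by
  intro S hS δ hδ hineq
  have hW' : wV' S ≤ m' := by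
    rw [hwV', ← hm']
    exact_mod_cast sum_card_filter_inter_le_card ((hValid S).mp hS).2 M₂ p
  have hγm' : γ * m' = 4 * k / ε := by
    rw [hγ]
    field_simp
  have hγW' : γ * wV' S ≤ γ * m' := mul_le_mul_of_nonneg_left hW' (by rw [hγ]; positivity)
  have hloss := welfare_loss_le (k := k) (by exact_mod_cast hk) hε0 hε1 hδ hOPT1
  rw [hsum, hγm'] at hineq
  rw [hγm'] at hγW'
  linarith

theorem stmt13 (k : ℕ) (hk : 1 ≤ k)
    (Item : Type) [Fintype Item] [DecidableEq Item]
    (M₁ M₂ : Finset Item) (hdisj : Disjoint M₁ M₂)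
    (m' : ℕ) (hm' : M₂.card = m') (hm'pos : 1 ≤ m')
    (ε : ℝ) (hε0 : 0 < ε) (hε1 : ε ≤ 1)
    (γ : ℝ) (hγ : γ = 4 * k / (ε * m'))
    -- the original valuations on M₁
    (v : Fin k → Finset Item → ℝ)
    (hv0 : ∀ i, v i ∅ = 0)
    (hnonneg : ∀ i S, 0 ≤ v i S)
    (hmono : ∀ i, ∀ S T : Finset Item, S ⊆ T → v i S ≤ v i T)
    (hmax : ∃ i, v i M₁ = 1) (hmax' : ∀ i, v i M₁ ≤ 1)
    -- the perfect valuation profile on M₂ is generated by the total allocation p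
    (p : Item → Fin k)
    (Valid : (Fin k → Finset Item) → Prop)
    (hValid : ∀ S, Valid S ↔ (∀ i, S i ⊆ M₁ ∪ M₂) ∧
      ∀ i j, i ≠ j → Disjoint (S i) (S j))
    (wV wV' : (Fin k → Finset Item) → ℝ)
    (hwV : ∀ S, wV S = ∑ i, v i (S i ∩ M₁))
    (hwV' : ∀ S, wV' S = ∑ i, (((S i ∩ M₂).filter fun x => p x = i).card : ℝ))
    (OPT OPTstar : ℝ)
    (hOPT : IsGreatest {w : ℝ | ∃ S, Valid S ∧ w = wV S} OPT)
    (hOPT1 : 1 ≤ OPT) (hOPTk : OPT ≤ (k : ℝ))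
    (hOPTstar : IsGreatest {w : ℝ | ∃ S, Valid S ∧ w = wV S + γ * wV' S} OPTstar)
    (hsum : OPTstar = OPT + γ * m') :
    ∀ S, Valid S → ∀ δ : ℝ, 0 ≤ δ →
      (1 - δ) * OPTstar ≤ wV S + γ * wV' S → (1 - 5 * k * δ / ε) * OPT ≤ wV S :=
  stmt13_general k hk Item M₁ M₂ m' hm' hm'pos ε hε0 hε1 γ hγ p Valid hValid wV wV' hwV' OPT OPTstar
    hOPT1 hsum
end

section
/- Let R be a set of functions from a finite set M (|M| = m) to a finite set N, let L ⊆ N with |L| = n, let 2 ≤ q ≤ n, ε > 0, γ > 0, and set r = 1 − (q−1)/n − ε. Let A be the set of all f ∈ L^M with Ham(f, R) < r, and suppose |A| ≥ γ n^m. Then there exists a subset J ⊆ M with |J| = ⌈εm/2⌉ such that the number of distinct functions g ∈ L^J that occur as restrictions to J of elements of R is at least γ·((q − 1 + εn/2)/(1 − ε/2))^{εm/2}. -/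
/-!
Every `f ∈ A` agrees with a codeword `G f ∈ R` on at least `x = ((q - 1)/n + ε) m`, hence on at
least `t = ⌈x⌉`, coordinates. Double counting the pairs `(f, J)` with `J` a `b`-subset of the
agreement set of `f` yields a `b`-set `J` inside the agreement sets of at least
`|A| C(t, b) / C(m, b)` functions `f`. Their restrictions to `J` are restrictions of codewords, and
at most `n ^ (m - b)` functions of `L ^ M` share a restriction, so `R` has at least
`γ n ^ b C(t, b) / C(m, b)` restrictions to `J` in `L ^ J`. Finally
`ρ ^ b C(m, b) ≤ n ^ b C(t, b)` factor by factor, because `ρ ≤ n` and `ρ (m - b) = n (x - b)`,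
where `ρ = (q - 1 + ε n / 2) / (1 - ε / 2)`.
-/

open Finset

theorem card_filter_eq_add_hammingDist {ι β : Type*} [Fintype ι] [DecidableEq β] (f g : ι → β) :
    #{x | f x = g x} + hammingDist f g = Fintype.card ι := by
  rw [hammingDist, ← card_univ]
  exact card_filter_add_card_filter_not _

theorem le_card_filter_eq_of_hammingDist_div_lt {ι β : Type*} [Fintype ι] [DecidableEq β]
    {f g : ι → β} {r : ℝ} (h : (hammingDist f g : ℝ) / Fintype.card ι < r) :
    (1 - r) * Fintype.card ι ≤ #{x | f x = g x} := by
  have hsum : (#{x | f x = g x} : ℝ) + hammingDist f g = Fintype.card ι := by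
    exact_mod_cast card_filter_eq_add_hammingDist f g
  rcases (Fintype.card ι).eq_zero_or_pos with hι | hι
  · simp [hι]
  · have : (hammingDist f g : ℝ) < r * Fintype.card ι := (div_lt_iff₀ (by positivity)).1 h
    linarith

theorem exists_card_mul_choose_le_card_filter_subset {α M : Type*} [Fintype M] [DecidableEq M]
    (A : Finset α) (I : α → Finset M) {t b : ℕ} (hI : ∀ f ∈ A, t ≤ #(I f))
    (hb : b ≤ Fintype.card M) :
    ∃ J : Finset M, #J = b ∧
      #A * t.choose b ≤ (Fintype.card M).choose b * #{f ∈ A | J ⊆ I f} := by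
  set 𝒥 := (univ : Finset M).powersetCard b
  have h𝒥 : #𝒥 = (Fintype.card M).choose b := by simp [𝒥]
  have hpairs : #A * t.choose b ≤ ∑ J ∈ 𝒥, #{f ∈ A | J ⊆ I f} := calc
    #A * t.choose b ≤ ∑ f ∈ A, #{J ∈ 𝒥 | J ⊆ I f} := by
      rw [← smul_eq_mul, ← sum_const]
      refine sum_le_sum fun f hf => ?_
      have : {J ∈ 𝒥 | J ⊆ I f} = (I f).powersetCard b := by
        ext J; simp [𝒥, and_comm]
      rw [this, card_powersetCard]
      exact Nat.choose_le_choose b (hI f hf)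
    _ = ∑ J ∈ 𝒥, #{f ∈ A | J ⊆ I f} :=
      sum_card_bipartiteAbove_eq_sum_card_bipartiteBelow _
  obtain ⟨J, hJ, hJA⟩ := exists_le_of_sum_le (s := 𝒥) (f := fun _ => #A * t.choose b)
    (g := fun J => #𝒥 * #{f ∈ A | J ⊆ I f})
    (powersetCard_nonempty.2 (by simpa using hb)) (by
      rw [sum_const, ← mul_sum, smul_eq_mul]
      exact Nat.mul_le_mul_left _ hpairs)
  exact ⟨J, (mem_powersetCard.1 hJ).2, h𝒥 ▸ hJA⟩

theorem card_le_pow_mul_card_image_restrict {M N : Type*} [Fintype M] [DecidableEq M]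
    [DecidableEq N] {L : Finset N} {B : Finset (M → N)} (hB : ∀ f ∈ B, ∀ x, f x ∈ L)
    (J : Finset M) : #B ≤ #L ^ #Jᶜ * #(B.image fun f (y : J) => f y) := by
  refine card_le_mul_card_image B _ fun a _ => ?_
  calc #{f ∈ B | (fun y : J => f y) = a}
      ≤ #(Fintype.piFinset fun _ : (Jᶜ : Finset M) => L) := by
        refine card_le_card_of_injOn (fun f (y : (Jᶜ : Finset M)) => f y)
          (fun f hf => Fintype.mem_piFinset.2 fun y => hB f (mem_filter.1 hf).1 y) ?_
        intro f₁ hf₁ f₂ hf₂ hcompl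
        funext x
        by_cases hx : x ∈ J
        · have h₁ := congrFun (mem_filter.1 hf₁).2 ⟨x, hx⟩
          have h₂ := congrFun (mem_filter.1 hf₂).2 ⟨x, hx⟩
          exact h₁.trans h₂.symm
        · exact congrFun hcompl ⟨x, mem_compl.2 hx⟩
    _ = #L ^ #Jᶜ := by simp

theorem Nat.cast_descFactorial_eq_prod_range {R : Type*} [CommRing R] {m b : ℕ} (h : b ≤ m) :
    (m.descFactorial b : R) = ∏ i ∈ range b, ((m : R) - i) := by
  rw [Nat.descFactorial_eq_prod_range, Nat.cast_prod]
  exact prod_congr rfl fun i hi => Nat.cast_sub (by simp at hi; omega)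

theorem pow_mul_choose_le_pow_mul_choose {K : Type*} [Field K] [LinearOrder K]
    [IsStrictOrderedRing K] {ρ c : K} {m t b : ℕ} (hρ : 0 ≤ ρ) (hρc : ρ ≤ c)
    (hbm : b ≤ m) (hbt : b ≤ t) (h : ρ * (m - b) ≤ c * (t - b)) :
    ρ ^ b * m.choose b ≤ c ^ b * t.choose b := by
  have hfac : (0 : K) < b.factorial := by positivity
  refine le_of_mul_le_mul_right ?_ hfac
  have hdesc (k : ℕ) : (k.choose b : K) * b.factorial = k.descFactorial b := by
    rw [Nat.descFactorial_eq_factorial_mul_choose]; push_cast; ring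
  have hpow (x : K) (k : ℕ) : x ^ b * ∏ i ∈ range b, ((k : K) - i) = ∏ i ∈ range b, x * (k - i) := by
    rw [prod_mul_distrib, prod_const, card_range]
  rw [mul_assoc, mul_assoc, hdesc, hdesc, Nat.cast_descFactorial_eq_prod_range hbm,
    Nat.cast_descFactorial_eq_prod_range hbt, hpow, hpow]
  refine prod_le_prod (fun i hi => ?_) fun i hi => ?_
  all_goals have hi : (i : K) ≤ b := by exact_mod_cast (mem_range.1 hi).le
  · exact mul_nonneg hρ (by linarith [(Nat.cast_le (α := K)).2 hbm])
  -- ρ (m - i) = ρ (m - b) + ρ (b - i) ≤ c (t - b) + c (b - i)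
  · nlinarith [mul_le_mul_of_nonneg_right hρc (sub_nonneg.2 hi)]

theorem exists_card_mul_choose_le_ncard_restrict {M N : Type*} [Fintype M] [DecidableEq M]
    [DecidableEq N] {L : Finset N} {R A : Finset (M → N)} (hAL : ∀ f ∈ A, ∀ x, f x ∈ L) {t b : ℕ}
    (hAR : ∀ f ∈ A, ∃ g ∈ R, t ≤ #{x | f x = g x}) (hb : b ≤ Fintype.card M) :
    ∃ J : Finset M, #J = b ∧
      #A * t.choose b ≤ (Fintype.card M).choose b * (#L ^ (Fintype.card M - b) *
        {g : J → N | (∀ y, g y ∈ L) ∧ ∃ f ∈ R, ∀ y : J, g y = f y}.ncard) := by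
  choose! G hGR hG using hAR
  obtain ⟨J, hJ, hcount⟩ :=
    exists_card_mul_choose_le_card_filter_subset A (fun f => {x | f x = G f x}) hG hb
  refine ⟨J, hJ, hcount.trans (Nat.mul_le_mul_left _ ?_)⟩
  set AJ := {f ∈ A | J ⊆ ({x | f x = G f x} : Finset M)}
  have hfinite : {g : J → N | (∀ y, g y ∈ L) ∧ ∃ f ∈ R, ∀ y : J, g y = f y}.Finite := by
    refine (R.finite_toSet.image fun f (y : J) => f y).subset ?_
    rintro g ⟨-, f, hf, hgf⟩
    exact ⟨f, hf, funext fun y => (hgf y).symm⟩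
  have himage : ↑(AJ.image fun f (y : J) => f y) ⊆
      {g : J → N | (∀ y, g y ∈ L) ∧ ∃ f ∈ R, ∀ y : J, g y = f y} := by
    intro g hg
    obtain ⟨f, hf, rfl⟩ := mem_image.1 hg
    obtain ⟨hfA, hJf⟩ := mem_filter.1 hf
    exact ⟨fun y => hAL f hfA y, G f, hGR f hfA, fun y => (mem_filter.1 (hJf y.2)).2⟩
  calc #AJ ≤ #L ^ #Jᶜ * #(AJ.image fun f (y : J) => f y) :=
        card_le_pow_mul_card_image_restrict (fun f hf => hAL f (mem_filter.1 hf).1) J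
    _ ≤ _ := by
      rw [card_compl, hJ]
      exact Nat.mul_le_mul_left _
        ((Set.ncard_coe_finset _).symm.trans_le (Set.ncard_le_ncard himage hfinite))

theorem exists_mul_pow_le_ncard_restrict {M N : Type*} [Fintype M] [DecidableEq M]
    [DecidableEq N] {L : Finset N} {R A : Finset (M → N)} (hAL : ∀ f ∈ A, ∀ x, f x ∈ L)
    {x ρ γ : ℝ} {b : ℕ} (hAR : ∀ f ∈ A, ∃ g ∈ R, x ≤ #{y | f y = g y})
    (hL : 0 < #L) (hγ : 0 ≤ γ) (hA : γ * #L ^ Fintype.card M ≤ #A)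
    (hρ : 0 ≤ ρ) (hρL : ρ ≤ #L) (hbm : b ≤ Fintype.card M) (hbx : b ≤ x)
    (hρx : ρ * (Fintype.card M - b) ≤ #L * (x - b)) :
    ∃ J : Finset M, #J = b ∧
      γ * ρ ^ b ≤ {g : J → N | (∀ y, g y ∈ L) ∧ ∃ f ∈ R, ∀ y : J, g y = f y}.ncard := by
  set t := ⌈x⌉₊
  have hbt : b ≤ t := by exact_mod_cast hbx.trans (Nat.le_ceil x)
  obtain ⟨J, hJ, hcount⟩ := exists_card_mul_choose_le_ncard_restrict hAL (t := t)
    (fun f hf => (hAR f hf).imp fun g ⟨hg, hx⟩ => ⟨hg, Nat.ceil_le.2 hx⟩) hbm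
  refine ⟨J, hJ, ?_⟩
  have hchoose : ρ ^ b * (Fintype.card M).choose b ≤ #L ^ b * t.choose b :=
    pow_mul_choose_le_pow_mul_choose hρ hρL hbm hbt
      (hρx.trans (by gcongr; exact Nat.le_ceil x))
  have hcount_real : (#A * t.choose b : ℝ) ≤ (Fintype.card M).choose b *
      (#L ^ (Fintype.card M - b) *
        {g : J → N | (∀ y, g y ∈ L) ∧ ∃ f ∈ R, ∀ y : J, g y = f y}.ncard) := by
    exact_mod_cast hcount
  have hpow : (#L : ℝ) ^ b * #L ^ (Fintype.card M - b) = #L ^ Fintype.card M := by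
    rw [← pow_add, Nat.add_sub_cancel' hbm]
  have hCP : (0 : ℝ) < (Fintype.card M).choose b * #L ^ (Fintype.card M - b) := by
    have := Nat.choose_pos hbm
    positivity
  refine le_of_mul_le_mul_right ?_ hCP
  calc γ * ρ ^ b * ((Fintype.card M).choose b * #L ^ (Fintype.card M - b))
      = γ * (ρ ^ b * (Fintype.card M).choose b) * #L ^ (Fintype.card M - b) := by ring
    _ ≤ γ * (#L ^ b * t.choose b) * #L ^ (Fintype.card M - b) := by gcongr
    _ = γ * #L ^ Fintype.card M * t.choose b := by rw [← hpow]; ring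
    _ ≤ #A * t.choose b := by gcongr
    _ ≤ _ := hcount_real
    _ = _ := by ring

theorem ncard_setOf_forall_mem_and {M N : Type*} [Fintype M] [DecidableEq M] (L : Finset N)
    (p : (M → N) → Prop) [DecidablePred p] :
    {f : M → N | (∀ x, f x ∈ L) ∧ p f}.ncard = #{f ∈ Fintype.piFinset fun _ => L | p f} := by
  rw [← Set.ncard_coe_finset]
  congr
  ext f
  simp

theorem stmt17_general {M N : Type*} [Fintype M] [DecidableEq N]
    (n q : ℕ) (hn : 2 ≤ n) (hq2 : 2 ≤ q)
    (ε γ : ℝ) (hε : 0 < ε) (hγ : 0 < γ)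
    (m : ℕ) (hm : Fintype.card M = m)
    (L : Finset N) (hL : L.card = n)
    (R : Finset (M → N))
    (b : ℕ) (hb : (b : ℝ) = ε * m / 2)
    (hA : γ * (n : ℝ) ^ m ≤
      ({f : M → N | (∀ x, f x ∈ L) ∧ ∃ g ∈ R,
        (hammingDist f g : ℝ) / m < 1 - ((q : ℝ) - 1) / n - ε}.ncard : ℝ)) :
    ∃ J : Finset M, J.card = b ∧
      γ * ((((q : ℝ) - 1 + ε * n / 2) / (1 - ε / 2)) ^ (ε * m / 2)) ≤
        ({g : {x // x ∈ J} → N | (∀ y, g y ∈ L) ∧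
          ∃ f ∈ R, ∀ y : {x // x ∈ J}, g y = f ↑y}.ncard : ℝ) := by
  classical
  subst hm hL
  set r : ℝ := 1 - ((q : ℝ) - 1) / #L - ε
  set A := {f ∈ Fintype.piFinset fun _ : M => L |
    ∃ g ∈ R, (hammingDist f g : ℝ) / Fintype.card M < r}
  rw [ncard_setOf_forall_mem_and] at hA
  have hL_pos : (0 : ℝ) < #L := by exact_mod_cast (by omega : 0 < #L)
  have hq : (0 : ℝ) ≤ q - 1 := by linarith [show (2 : ℝ) ≤ q by exact_mod_cast hq2]
  have hr : 0 < r := by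
    have hA_pos : (0 : ℝ) < #A := lt_of_lt_of_le (by positivity) hA
    obtain ⟨f, hf⟩ : A.Nonempty := card_pos.1 (by exact_mod_cast hA_pos)
    obtain ⟨g, -, hg⟩ := (mem_filter.1 hf).2
    exact lt_of_le_of_lt (by positivity) hg
  have hε1 : ε < 1 := by linarith [div_nonneg hq hL_pos.le]
  have hbm : (b : ℝ) ≤ Fintype.card M := by rw [hb]; nlinarith
  have hbx : (b : ℝ) ≤ (1 - r) * Fintype.card M := by
    rw [hb]; nlinarith [div_nonneg hq hL_pos.le]
  have hρL : (q - 1 + ε * #L / 2) / (1 - ε / 2) ≤ (#L : ℝ) := by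
    rw [div_le_iff₀ (by linarith)]
    nlinarith [mul_pos hr hL_pos, div_mul_cancel₀ ((q : ℝ) - 1) hL_pos.ne']
  have hρx : (q - 1 + ε * #L / 2) / (1 - ε / 2) * (Fintype.card M - b) =
      #L * ((1 - r) * Fintype.card M - b) := by
    have : (2 : ℝ) - ε ≠ 0 := by linarith
    rw [hb]; simp only [r]; field_simp; ring
  obtain ⟨J, hJ, hJA⟩ := exists_mul_pow_le_ncard_restrict
    (fun f hf => Fintype.mem_piFinset.1 (mem_filter.1 hf).1)
    (fun f hf => (mem_filter.1 hf).2.imp fun g ⟨hg, hd⟩ =>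
      ⟨hg, le_card_filter_eq_of_hammingDist_div_lt hd⟩)
    (by exact_mod_cast hL_pos) hγ.le hA (div_nonneg (by positivity) (by linarith)) hρL
    (by exact_mod_cast hbm) hbx hρx.le
  exact ⟨J, hJ, by rwa [← hb, Real.rpow_natCast]⟩

theorem stmt17 {M N : Type*} [Fintype M] [DecidableEq N]
    (n q : ℕ) (hn : 2 ≤ n) (hq2 : 2 ≤ q) (hqn : q ≤ n)
    (ε γ : ℝ) (hε : 0 < ε) (hγ : 0 < γ)
    (m : ℕ) (hm : Fintype.card M = m)
    (L : Finset N) (hL : L.card = n)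
    (R : Finset (M → N))
    (b : ℕ) (hb : (b : ℝ) = ε * m / 2)
    (hA : γ * (n : ℝ) ^ m ≤
      ({f : M → N | (∀ x, f x ∈ L) ∧ ∃ g ∈ R,
        (hammingDist f g : ℝ) / m < 1 - ((q : ℝ) - 1) / n - ε}.ncard : ℝ)) :
    ∃ J : Finset M, J.card = b ∧
      γ * ((((q : ℝ) - 1 + ε * n / 2) / (1 - ε / 2)) ^ (ε * m / 2)) ≤
        ({g : {x // x ∈ J} → N | (∀ y, g y ∈ L) ∧
          ∃ f ∈ R, ∀ y : {x // x ∈ J}, g y = f ↑y}.ncard : ℝ) :=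
  stmt17_general n q hn hq2 ε γ hε hγ m hm L hL R b hb hA
end
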